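/- Let d ≥ 2, let R be a non-empty family of partitions of [d], and let P be a partition of [d] such that some part J₀ ∈ P is not contained in any part of any partition in R. Then Δ_P : [n]^d → 𝔽 has R-rank at least n. -/

import Mathlib

open Finset

/-- `P` is a partition of `[d] = Fin d`: parts are non-empty, pairwise disjoint,
and their union is all of `Fin d`. -/
def IsPartitionOn (d : ℕ) (P : Finset (Finset (Fin d))) : Prop :=
  (∀ J ∈ P, J.Nonempty) ∧
  (∀ J ∈ P, ∀ K ∈ P, J ≠ K → Disjoint J K) ∧
  P.sup id = Finset.univ

/-- `P` is finer than `Q`: every part of `P` is contained in some part of `Q`. -/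
def Finer {d : ℕ} (P Q : Finset (Finset (Fin d))) : Prop :=
  ∀ J ∈ P, ∃ K ∈ Q, J ⊆ K

/-- Least common refinement of two partitions. -/
def partMeet {d : ℕ} (P Q : Finset (Finset (Fin d))) : Finset (Finset (Fin d)) :=
  ((P ×ˢ Q).image fun p => p.1 ∩ p.2).filter fun J => J.Nonempty

/-- Least common refinement of two families of partitions. -/
def famMeet {d : ℕ} (R₁ R₂ : Finset (Finset (Finset (Fin d)))) :
    Finset (Finset (Finset (Fin d))) :=
  (R₁ ×ˢ R₂).image fun p => partMeet p.1 p.2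

/-- `R₂ ≺ R₁` for families of partitions. -/
def FamFiner {d : ℕ} (R₂ R₁ : Finset (Finset (Finset (Fin d)))) : Prop :=
  ∀ P ∈ R₂, ∃ Q ∈ R₁, Finer P Q

/-- `R` is a non-empty family of partitions of `[d]`. -/
def IsPartitionFamily (d : ℕ) (R : Finset (Finset (Finset (Fin d)))) : Prop :=
  R.Nonempty ∧ ∀ P ∈ R, IsPartitionOn d P

variable {F : Type*} [Field F]

/-- `f` depends only on the coordinates in `J`. -/
def DependsOnlyOn {d : ℕ} {n : Fin d → ℕ} (f : (∀ j, Fin (n j)) → F)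
    (J : Finset (Fin d)) : Prop :=
  ∀ x y : ∀ j, Fin (n j), (∀ j ∈ J, x j = y j) → f x = f y

/-- `T` has `R`-rank at most 1. -/
def RankOne {d : ℕ} {n : Fin d → ℕ} (R : Finset (Finset (Finset (Fin d))))
    (T : (∀ j, Fin (n j)) → F) : Prop :=
  ∃ P ∈ R, ∃ a : Finset (Fin d) → ((∀ j, Fin (n j)) → F),
    (∀ J ∈ P, DependsOnlyOn (a J) J) ∧ ∀ x, T x = ∏ J ∈ P, a J x

/-- `T` has `R`-rank at most `k`. -/
def RRankLE {d : ℕ} {n : Fin d → ℕ} (R : Finset (Finset (Finset (Fin d))))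
    (T : (∀ j, Fin (n j)) → F) (k : ℕ) : Prop :=
  ∃ c : Fin k → ((∀ j, Fin (n j)) → F),
    (∀ i, RankOne R (c i)) ∧ ∀ x, T x = ∑ i, c i x

open Classical in
/-- The tensor `Δ_P`, the product of the identity tensors on the parts of `P`. -/
noncomputable def DeltaP {d n : ℕ} (P : Finset (Finset (Fin d))) :
    (Fin d → Fin n) → F :=
  fun x => if ∀ J ∈ P, ∀ j₁ ∈ J, ∀ j₂ ∈ J, x j₁ = x j₂ then 1 else 0

/-!
Fix `j₀ ∈ J₀` and freeze every coordinate outside `J₀` at a constant. This turns `Δ_P` into the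
diagonal tensor on `[n]^{J₀}`, and a summand `∏_{J ∈ Q} a_J` of an `R`-rank decomposition into
`a_K · ∏_{J ≠ K} a_J`, where `K ∋ j₀`: a function of the coordinates in `K ∩ J₀` times one of
those in `J₀ \ K`. Since `J₀ ⊄ K`, this is a partition-rank-one tensor in the variables `J₀`, so
`k` is at least the partition rank of the diagonal tensor, which is `n` by Naslund's argument.
-/

open scoped Classical in
theorem Submodule.exists_mem_finrank_le_card_support {X : Type*} [Fintype X]
    (W : Submodule F (X → F)) : ∃ h ∈ W, Module.finrank F W ≤ #{x | h x ≠ 0} := by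
  suffices ∀ m ≤ Module.finrank F W, ∃ h ∈ W, m ≤ #{x | h x ≠ 0} from this _ le_rfl
  intro m
  induction m with
  | zero => exact fun _ => ⟨0, W.zero_mem, Nat.zero_le _⟩
  | succ m ih =>
    intro hm
    obtain ⟨h, hW, hmh⟩ := ih (by omega)
    by_cases hlt : m + 1 ≤ #{x | h x ≠ 0}
    · exact ⟨h, hW, hlt⟩
    -- `W` is too big to be determined by the values on the support of `h`
    have hnotinj : ¬ Function.Injective
        ((LinearMap.funLeft F F (Subtype.val : {x // h x ≠ 0} → X)).comp W.subtype) := by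
      intro hinj
      have := LinearMap.finrank_le_finrank_of_injective hinj
      simp only [Module.finrank_fintype_fun_eq_card, Fintype.card_subtype] at this
      omega
    obtain ⟨w, hwker, hw0⟩ : ∃ w : W, (∀ x, h x ≠ 0 → (w : X → F) x = 0) ∧ w ≠ 0 := by
      rw [← LinearMap.ker_eq_bot, LinearMap.ker_eq_bot'] at hnotinj
      push Not at hnotinj
      obtain ⟨w, hw, hw0⟩ := hnotinj
      exact ⟨w, fun x hx => by simpa using congrFun hw ⟨x, hx⟩, hw0⟩
    obtain ⟨y, hy⟩ : ∃ y, (w : X → F) y ≠ 0 := by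
      by_contra! hy
      exact hw0 (Subtype.ext (funext hy))
    have hhy : h y = 0 := by
      by_contra hhy
      exact hy (hwker y hhy)
    have hsub : insert y ({x | h x ≠ 0} : Finset X) ⊆ ({x | (h + w) x ≠ 0} : Finset X) := by
      intro x hx
      simp only [mem_insert, mem_filter, mem_univ, true_and] at hx ⊢
      rcases hx with rfl | hx
      · simpa [hhy] using hy
      · simpa [hwker x hx] using hx
    refine ⟨h + w, W.add_mem hW w.2, ?_⟩
    have := card_le_card hsub
    rw [card_insert_of_notMem (by simp [hhy])] at this
    omega

open scoped Classical in
theorem exists_dotProduct_eq_zero_card_le {α κ : Type*} [Fintype α] [Fintype κ]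
    (φ : κ → α → F) :
    ∃ h : α → F, (∀ i, φ i ⬝ᵥ h = 0) ∧ Fintype.card α ≤ #{v | h v ≠ 0} + Fintype.card κ := by
  set M := (Matrix.of φ).mulVecLin
  obtain ⟨h, hker, hcard⟩ := (LinearMap.ker M).exists_mem_finrank_le_card_support
  refine ⟨h, fun i => congrFun (LinearMap.mem_ker.mp hker) i, ?_⟩
  have hrank := LinearMap.finrank_range_add_finrank_ker M
  have hrange : Module.finrank F (LinearMap.range M) ≤ Fintype.card κ :=
    (Submodule.finrank_le _).trans (Module.finrank_fintype_fun_eq_card F).le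
  rw [Module.finrank_fintype_fun_eq_card] at hrank
  omega

open scoped Classical in
theorem card_support_add_card_support_le {α : Type*} [Fintype α] (c h : α → F) :
    #{v | c v ≠ 0} + #{v | h v ≠ 0} ≤ #{v | h v * c v ≠ 0} + Fintype.card α := by
  have hinter : ({v | c v ≠ 0} : Finset α) ∩ ({v | h v ≠ 0} : Finset α) =
      ({v | h v * c v ≠ 0} : Finset α) := by
    ext v
    simp [and_comm]
  rw [← card_union_add_card_inter, hinter, add_comm]
  exact Nat.add_le_add_left (card_le_univ _) _

section Tensors

variable {d n : ℕ}

omit [Field F] in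
theorem DependsOnlyOn.mono {f : (Fin d → Fin n) → F} {A B : Finset (Fin d)}
    (hf : DependsOnlyOn f A) (hAB : A ⊆ B) : DependsOnlyOn f B :=
  fun x y hxy => hf x y fun j hj => hxy j (hAB hj)

omit [Field F] in
theorem DependsOnlyOn.comp_piecewise {f : (Fin d → Fin n) → F} {K : Finset (Fin d)}
    (hf : DependsOnlyOn f K) (S : Finset (Fin d)) (z : Fin d → Fin n) :
    DependsOnlyOn (fun x => f (S.piecewise x z)) (K ∩ S) := by
  intro x y hxy
  refine hf _ _ fun j hj => ?_
  by_cases hjS : j ∈ S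
  · simp only [piecewise_eq_of_mem _ _ _ hjS]
    exact hxy j (mem_inter.mpr ⟨hj, hjS⟩)
  · simp only [piecewise_eq_of_notMem _ _ _ hjS]

noncomputable def diagTensor (S : Finset (Fin d)) (c : Fin n → F) (x : Fin d → Fin n) : F :=
  ∑ v, if ∀ j ∈ S, x j = v then c v else 0

theorem diagTensor_const {S : Finset (Fin d)} (hS : S.Nonempty) (c : Fin n → F) (v : Fin n) :
    diagTensor S c (fun _ => v) = c v := by
  obtain ⟨j, hj⟩ := hS
  rw [diagTensor, sum_eq_single v]
  · simp
  · intro w _ hwv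
    rw [if_neg fun h => hwv (h j hj).symm]
  · simp

theorem diagTensor_apply_eq_ite {S : Finset (Fin d)} {j₀ : Fin d} (hj₀ : j₀ ∈ S)
    (c : Fin n → F) (x : Fin d → Fin n) :
    diagTensor S c x = if ∀ j₁ ∈ S, ∀ j₂ ∈ S, x j₁ = x j₂ then c (x j₀) else 0 := by
  split_ifs with hx
  · rw [diagTensor, sum_eq_single (x j₀)]
    · rw [if_pos fun j hj => hx j hj j₀ hj₀]
    · intro w _ hw
      rw [if_neg fun h => hw (h j₀ hj₀).symm]
    · simp
  · refine sum_eq_zero fun v _ => if_neg fun h => hx fun j₁ h₁ j₂ h₂ => ?_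
    rw [h j₁ h₁, h j₂ h₂]

noncomputable def contract (s : Fin d) (h : Fin n → F) (T : (Fin d → Fin n) → F)
    (x : Fin d → Fin n) : F :=
  ∑ v, h v * T (Function.update x s v)

theorem contract_sum {ι : Type*} (s : Fin d) (h : Fin n → F) (I : Finset ι)
    (t : ι → (Fin d → Fin n) → F) :
    contract s h (∑ i ∈ I, t i) = ∑ i ∈ I, contract s h (t i) := by
  ext x
  simp only [contract, Finset.sum_apply, Finset.mul_sum]
  exact sum_comm

theorem contract_diagTensor_insert {s : Fin d} {S : Finset (Fin d)} (hs : s ∉ S)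
    (h c : Fin n → F) : contract s h (diagTensor (insert s S) c) = diagTensor S (h * c) := by
  ext x
  have hcond : ∀ v w, (∀ j ∈ insert s S, Function.update x s v j = w) ↔
      w = v ∧ ∀ j ∈ S, x j = w := by
    intro v w
    simp only [forall_mem_insert, Function.update_self]
    refine and_congr eq_comm (forall₂_congr fun j hj => ?_)
    rw [Function.update_of_ne (ne_of_mem_of_not_mem hj hs)]
  simp only [contract, diagTensor, hcond, ite_and, Finset.mul_sum, mul_ite, mul_zero]
  rw [sum_comm]
  simp [Pi.mul_apply]

theorem contract_mul_of_dependsOnlyOn {s : Fin d} {B : Finset (Fin d)} (hs : s ∉ B)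
    (h : Fin n → F) (f : (Fin d → Fin n) → F) {g : (Fin d → Fin n) → F}
    (hg : DependsOnlyOn g B) : contract s h (f * g) = contract s h f * g := by
  ext x
  simp only [contract, Pi.mul_apply, sum_mul, mul_assoc]
  refine sum_congr rfl fun v _ => ?_
  rw [hg _ x fun j hj => Function.update_of_ne (ne_of_mem_of_not_mem hj hs) _ _]

theorem DependsOnlyOn.contract {s : Fin d} {A : Finset (Fin d)} {f : (Fin d → Fin n) → F}
    (hf : DependsOnlyOn f A) (h : Fin n → F) : DependsOnlyOn (contract s h f) (A.erase s) := by
  intro x y hxy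
  refine sum_congr rfl fun v _ => ?_
  congr 1
  refine hf _ _ fun j hj => ?_
  by_cases hjs : j = s
  · simp [hjs]
  · simp only [Function.update_of_ne hjs]
    exact hxy j (mem_erase.mpr ⟨hjs, hj⟩)

theorem contract_eq_zero_of_dependsOnlyOn_singleton {s : Fin d} {h : Fin n → F}
    {f : (Fin d → Fin n) → F} (hf : DependsOnlyOn f {s})
    (horth : (fun v => f fun _ => v) ⬝ᵥ h = 0) : contract s h f = 0 := by
  ext x
  rw [Pi.zero_apply, ← horth, contract, dotProduct]
  refine sum_congr rfl fun v _ => ?_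
  rw [mul_comm, hf (Function.update x s v) (fun _ => v) fun j hj => by
    simp [mem_singleton.mp hj]]

def PartitionRankOne (S : Finset (Fin d)) (t : (Fin d → Fin n) → F) : Prop :=
  ∃ A f g, A.Nonempty ∧ A ⊂ S ∧ DependsOnlyOn f A ∧ DependsOnlyOn g (S \ A) ∧ t = f * g

theorem PartitionRankOne.exists_mem {S : Finset (Fin d)} {t : (Fin d → Fin n) → F}
    (ht : PartitionRankOne S t) {s : Fin d} (hs : s ∈ S) :
    ∃ A f g, s ∈ A ∧ A ⊂ S ∧ DependsOnlyOn f A ∧ DependsOnlyOn g (S \ A) ∧ t = f * g := by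
  obtain ⟨A, f, g, hA, hAS, hf, hg, rfl⟩ := ht
  by_cases hsA : s ∈ A
  · exact ⟨A, f, g, hsA, hAS, hf, hg, rfl⟩
  · refine ⟨S \ A, g, f, mem_sdiff.mpr ⟨hs, hsA⟩, sdiff_ssubset hAS.subset hA,
      hg, ?_, mul_comm f g⟩
    rwa [Finset.sdiff_sdiff_eq_self hAS.subset]

theorem not_partitionRankOne_singleton (s : Fin d) (t : (Fin d → Fin n) → F) :
    ¬ PartitionRankOne {s} t := by
  rintro ⟨A, -, -, hA, hAs, -⟩
  exact (ssubset_singleton_iff.mp hAs ▸ Finset.not_nonempty_empty) hA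

theorem partitionRankOne_contract_mul {s : Fin d} {S A : Finset (Fin d)}
    (hsA : s ∈ A) (hAS : A ⊂ insert s S) (hA : A ≠ {s}) (h : Fin n → F)
    {f g : (Fin d → Fin n) → F} (hf : DependsOnlyOn f A)
    (hg : DependsOnlyOn g (insert s S \ A)) : PartitionRankOne S (contract s h f * g) := by
  refine ⟨A.erase s, contract s h f, g, ?_, ?_, hf.contract h, hg.mono ?_, rfl⟩
  · exact (erase_nonempty hsA).mpr ((nontrivial_iff_ne_singleton hsA).mpr hA)
  · grind [ssubset_iff_of_subset]
  · grind

open scoped Classical in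
/-- Contracting the variable `s` against a vector `h` orthogonal to the summands that depend on
`x s` alone kills those summands and leaves a decomposition of `diagTensor S (h * c)` with one
variable fewer, and `h` can be chosen with at most as many zeros as there are such summands. -/
theorem card_support_le_of_diagTensor_eq_sum {S : Finset (Fin d)} (hS : S.Nonempty)
    {ι : Type*} {I : Finset ι} {c : Fin n → F} {t : ι → (Fin d → Fin n) → F}
    (ht : ∀ i ∈ I, PartitionRankOne S (t i)) (hT : diagTensor S c = ∑ i ∈ I, t i) :
    #{v | c v ≠ 0} ≤ #I := by
  induction hS using Finset.Nonempty.cons_induction generalizing I c t with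
  | singleton s =>
    have hI : I = ∅ := eq_empty_of_forall_notMem fun i hi =>
      not_partitionRankOne_singleton s (t i) (ht i hi)
    have hc : ∀ v, c v = 0 := fun v => by
      simpa [diagTensor_const (singleton_nonempty s), hI] using congrFun hT fun _ => v
    simp [hc]
  | cons s S hs hS ih =>
    rw [cons_eq_insert] at ht hT
    choose! A f g hsA hAS hf hg htfg using fun i hi => (ht i hi).exists_mem (S.mem_insert_self s)
    set I₁ := I.filter fun i => A i = {s}
    set I₂ := I.filter fun i => ¬ A i = {s}
    obtain ⟨h, horth, hcard⟩ :=
      exists_dotProduct_eq_zero_card_le fun i : I₁ => fun v => f i fun _ => v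
    have hterm : ∀ i ∈ I, contract s h (t i) = contract s h (f i) * g i := fun i hi => by
      rw [htfg i hi, contract_mul_of_dependsOnlyOn
        (fun hs' => (mem_sdiff.mp hs').2 (hsA i hi)) h (f i) (hg i hi)]
    have hcontract : diagTensor S (h * c) = ∑ i ∈ I₂, contract s h (f i) * g i := by
      rw [← contract_diagTensor_insert hs, hT, contract_sum,
        ← sum_filter_add_sum_filter_not I fun i => A i = {s}, sum_eq_zero, zero_add]
      · exact sum_congr rfl fun i hi => hterm i (mem_filter.mp hi).1
      · intro i hi
        obtain ⟨hiI, hAi⟩ := mem_filter.mp hi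
        rw [hterm i hiI, contract_eq_zero_of_dependsOnlyOn_singleton (hAi ▸ hf i hiI)
          (horth ⟨i, hi⟩), zero_mul]
    have hI₂ := ih (I := I₂) (fun i hi => by
      obtain ⟨hiI, hAi⟩ := mem_filter.mp hi
      exact partitionRankOne_contract_mul (hsA i hiI) (hAS i hiI) hAi h (hf i hiI) (hg i hiI))
      hcontract
    have hsplit : #I₁ + #I₂ = #I := card_filter_add_card_filter_not _
    have := card_support_add_card_support_le c h
    simp only [Fintype.card_fin, Fintype.card_coe] at this hcard
    simp only [Pi.mul_apply] at hI₂
    omega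

theorem IsPartitionOn.exists_mem {Q : Finset (Finset (Fin d))} (hQ : IsPartitionOn d Q)
    (j : Fin d) : ∃ K ∈ Q, j ∈ K := by
  simpa using (Finset.ext_iff.mp hQ.2.2 j).mpr (mem_univ j)

theorem deltaP_piecewise {P : Finset (Finset (Fin d))}
    (hP : ∀ J ∈ P, ∀ K ∈ P, J ≠ K → Disjoint J K) {J₀ : Finset (Fin d)} (hJ₀ : J₀ ∈ P)
    {j₀ : Fin d} (hj₀ : j₀ ∈ J₀) (z : Fin n) (x : Fin d → Fin n) :
    (DeltaP P (J₀.piecewise x fun _ => z) : F) = diagTensor J₀ 1 x := by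
  rw [diagTensor_apply_eq_ite hj₀, Pi.one_apply, DeltaP]
  refine if_congr ⟨fun hx j₁ h₁ j₂ h₂ => ?_, fun hx J hJ j₁ h₁ j₂ h₂ => ?_⟩ rfl rfl
  · simpa [piecewise_eq_of_mem _ _ _ h₁, piecewise_eq_of_mem _ _ _ h₂]
      using hx J₀ hJ₀ j₁ h₁ j₂ h₂
  · by_cases hJJ₀ : J = J₀
    · subst hJJ₀
      simpa [piecewise_eq_of_mem _ _ _ h₁, piecewise_eq_of_mem _ _ _ h₂]
        using hx j₁ h₁ j₂ h₂
    · have hdisj := disjoint_left.mp (hP J hJ J₀ hJ₀ hJJ₀)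
      rw [piecewise_eq_of_notMem _ _ _ (hdisj h₁),
        piecewise_eq_of_notMem _ _ _ (hdisj h₂)]

theorem RankOne.partitionRankOne_comp_piecewise {R : Finset (Finset (Finset (Fin d)))}
    (hR : ∀ Q ∈ R, IsPartitionOn d Q) {J₀ : Finset (Fin d)}
    (huncov : ∀ Q ∈ R, ∀ K ∈ Q, ¬ J₀ ⊆ K) {j₀ : Fin d} (hj₀ : j₀ ∈ J₀)
    (z : Fin d → Fin n) {T : (Fin d → Fin n) → F} (hT : RankOne R T) :
    PartitionRankOne J₀ fun x => T (J₀.piecewise x z) := by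
  obtain ⟨Q, hQ, a, ha, hTa⟩ := hT
  obtain ⟨K, hK, hj₀K⟩ := (hR Q hQ).exists_mem j₀
  refine ⟨K ∩ J₀, fun x => a K (J₀.piecewise x z),
    fun x => ∏ J ∈ Q.erase K, a J (J₀.piecewise x z), ⟨j₀, mem_inter.mpr ⟨hj₀K, hj₀⟩⟩,
    ?_, (ha K hK).comp_piecewise J₀ z, ?_, ?_⟩
  · exact Finset.ssubset_iff_subset_ne.mpr ⟨inter_subset_right,
      fun hKJ₀ => huncov Q hQ K hK (inter_eq_right.mp hKJ₀)⟩
  · intro x y hxy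
    refine prod_congr rfl fun J hJ => ?_
    obtain ⟨hJK, hJQ⟩ := mem_erase.mp hJ
    have hdisj := disjoint_left.mp ((hR Q hQ).2.1 J hJQ K hK hJK)
    refine (ha J hJQ).comp_piecewise J₀ z x y fun j hj => hxy j ?_
    obtain ⟨hjJ, hjJ₀⟩ := mem_inter.mp hj
    exact mem_sdiff.mpr ⟨hjJ₀, fun hjK => hdisj hjJ (mem_inter.mp hjK).1⟩
  · ext x
    exact (hTa _).trans (mul_prod_erase Q _ hK).symm

end Tensors

theorem deltaP_lower_bound_uncovered_part_general {d n : ℕ} (hn : 1 ≤ n)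
    (P : Finset (Finset (Fin d))) (R : Finset (Finset (Finset (Fin d))))
    (hP : IsPartitionOn d P) (hR : IsPartitionFamily d R)
    (J₀ : Finset (Fin d)) (hJ₀ : J₀ ∈ P)
    (huncov : ∀ Q ∈ R, ∀ K ∈ Q, ¬ J₀ ⊆ K) (k : ℕ)
    (h : RRankLE (n := fun _ => n) R (DeltaP P : (Fin d → Fin n) → F) k) :
    n ≤ k := by
  obtain ⟨j₀, hj₀⟩ := hP.1 J₀ hJ₀
  obtain ⟨c, hc, hsum⟩ := h
  let z : Fin n := ⟨0, hn⟩
  have hdiag : diagTensor J₀ 1 = ∑ i, fun x => c i (J₀.piecewise x fun _ => z) := by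
    ext x
    rw [Finset.sum_apply, ← deltaP_piecewise hP.2.1 hJ₀ hj₀ z x, hsum]
  simpa using card_support_le_of_diagTensor_eq_sum ⟨j₀, hj₀⟩
    (fun i _ => (hc i).partitionRankOne_comp_piecewise hR.2 huncov hj₀ _) hdiag

theorem deltaP_lower_bound_uncovered_part {d n : ℕ} (hd : 2 ≤ d) (hn : 1 ≤ n)
    (P : Finset (Finset (Fin d))) (R : Finset (Finset (Finset (Fin d))))
    (hP : IsPartitionOn d P) (hR : IsPartitionFamily d R)
    (J₀ : Finset (Fin d)) (hJ₀ : J₀ ∈ P)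
    (huncov : ∀ Q ∈ R, ∀ K ∈ Q, ¬ J₀ ⊆ K) (k : ℕ)
    (h : RRankLE (n := fun _ => n) R (DeltaP P : (Fin d → Fin n) → F) k) :
    n ≤ k :=
  deltaP_lower_bound_uncovered_part_general hn P R hP hR J₀ hJ₀ huncov k h
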